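/- Let m ≥ 4 and α ∈ (0,1], and suppose the increasingly ordered values p_(1) ≤ … ≤ p_(m) ∈ [0,1] satisfy i·α/(m·h_m) < p_(i) ≤ (i+1)·α/(m·h_m) for i = 1,…,m−1, and α/h_m < p_(m) ≤ α/h_{m−1}. Then the Benjamini–Yekutieli rejection set R^BY_α = R^(r*), with r* = max({r ∈ [m] : p_(r) ≤ α·r/(m·h_m)} ∪ {0}), is empty, while for every nonempty S ⊆ [m] the quantity e_S = ∑_{i∈S} 1{h_{|S|}·p_i ≤ α} / (α · max(⌈|S|·h_{|S|}·p_i/α⌉, 1)) satisfies α·e_S ≥ |S|/m; that is, the full set [m] belongs to the closed-BY collection while BY rejects nothing. -/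
import Mathlib

/-- The k-th harmonic number h_k = ∑_{i=1}^k 1/i. -/
noncomputable def harm (k : ℕ) : ℝ := ∑ i ∈ Finset.range k, (1 : ℝ) / ((i : ℝ) + 1)

lemma harm_nonneg (k : ℕ) : 0 ≤ harm k :=
  Finset.sum_nonneg fun i _ => by positivity

lemma harm_mono {k l : ℕ} (h : k ≤ l) : harm k ≤ harm l := by
  apply Finset.sum_le_sum_of_subset_of_nonneg (Finset.range_subset_range.2 h)
  intro i _ _; positivity

lemma harm_pos {k : ℕ} (h : 1 ≤ k) : 0 < harm k := by
  have h1 : harm 1 = 1 := by simp [harm]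
  have := harm_mono h
  linarith

lemma harm_ge_two {m : ℕ} (h : 4 ≤ m) : 2 ≤ harm m := by
  have h4 : harm 4 = 25/12 := by
    simp [harm, Finset.sum_range_succ]
    norm_num
  have := harm_mono h
  linarith

set_option maxHeartbeats 1600000 in
/-- An event where BY rejects nothing while closed BY rejects everything:
if i·α/(m·h_m) < p_(i) ≤ (i+1)·α/(m·h_m) for i = 1,…,m−1 and α/h_m < p_(m) ≤ α/h_{m−1}
(m ≥ 4), then no r ∈ [m] satisfies the BY condition p_(r) ≤ α·r/(m·h_m) (so R^BY = ∅),
while α·e_S ≥ |S|/m for every nonempty S, i.e. [m] is in the closed-BY collection. -/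
theorem statement_11 (m : ℕ) (hm : 4 ≤ m) (α : ℝ) (hα : α ∈ Set.Ioc (0 : ℝ) 1)
    (p : Fin m → ℝ) (hp : ∀ i, p i ∈ Set.Icc (0 : ℝ) 1)
    -- σ sorts the p-values in increasing order
    (σ : Equiv.Perm (Fin m)) (hσ : ∀ i j : Fin m, i ≤ j → p (σ i) ≤ p (σ j))
    -- pord r = p_(r), the r-th smallest value, for 1 ≤ r ≤ m
    (pord : ℕ → ℝ) (hpord : ∀ (r : ℕ) (hr : r < m), pord (r + 1) = p (σ ⟨r, hr⟩))
    (hlow : ∀ r : ℕ, 1 ≤ r → r ≤ m - 1 →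
      (r : ℝ) * α / ((m : ℝ) * harm m) < pord r ∧
      pord r ≤ ((r : ℝ) + 1) * α / ((m : ℝ) * harm m))
    (htop : α / harm m < pord m ∧ pord m ≤ α / harm (m - 1)) :
    -- BY rejects nothing
    (∀ r : ℕ, 1 ≤ r → r ≤ m → ¬ (pord r ≤ α * (r : ℝ) / ((m : ℝ) * harm m))) ∧
    -- the full set [m] belongs to the closed-BY collection
    (∀ S : Finset (Fin m), S.Nonempty →
      (S.card : ℝ) / (m : ℝ) ≤
        α * ∑ i ∈ S,
          (if harm S.card * p i ≤ α then (1 : ℝ) else 0) /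
            (α * ((max ⌈(S.card : ℝ) * harm S.card * p i / α⌉ 1 : ℤ) : ℝ))) := by
  obtain ⟨hα0, hα1⟩ := hα
  have hm0 : 0 < m := by omega
  have hmR : (0:ℝ) < m := by exact_mod_cast hm0
  have hh : 0 < harm m := harm_pos (by omega)
  have hh1 : 0 < harm (m-1) := harm_pos (by omega)
  have hh1m : harm (m-1) ≤ harm m := harm_mono (by omega)
  constructor
  · -- Part 1 : BY rejects nothing
    intro r hr1 hrm hle
    rcases eq_or_lt_of_le hrm with rfl | hlt
    · have h1 := htop.1
      have h2 : α * (r:ℝ) / ((r:ℝ) * harm r) = α / harm r := by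
        field_simp
      rw [h2] at hle
      linarith
    · have h1 := (hlow r hr1 (by omega)).1
      have h2 : (r:ℝ) * α / ((m:ℝ) * harm m) = α * (r:ℝ) / ((m:ℝ) * harm m) := by ring
      linarith [h2 ▸ h1]
  · -- Part 2
    intro S hS
    set s := S.card with hsdef
    have hs1 : 1 ≤ s := Finset.card_pos.mpr hS
    have hsm : s ≤ m := by
      simpa using Finset.card_le_card (Finset.subset_univ S)
    have hhs : 0 < harm s := harm_pos hs1
    have hhsm : harm s ≤ harm m := harm_mono hsm
    have hsR : (0:ℝ) < s := by exact_mod_cast hs1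
    have hsmR : (s:ℝ) ≤ m := by exact_mod_cast hsm
    set q : ℝ := α / ((m:ℝ) * harm m) with hqdef
    have hq : 0 < q := by positivity
    have hqe : (m:ℝ) * harm m * q = α := by
      rw [hqdef]; field_simp
    -- notation for the terms
    set D : Fin m → ℤ := fun i => max ⌈(s : ℝ) * harm s * p i / α⌉ 1 with hDdef
    have hD1 : ∀ i, (1:ℝ) ≤ (D i : ℝ) := by
      intro i; exact_mod_cast le_max_right _ 1
    have hD0 : ∀ i, (0:ℝ) < (D i : ℝ) := fun i => lt_of_lt_of_le one_pos (hD1 i)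
    set f : Fin m → ℝ := fun i =>
      (if harm s * p i ≤ α then (1 : ℝ) else 0) / ((D i : ℝ)) with hfdef
    have hf0 : ∀ i, 0 ≤ f i := by
      intro i
      apply div_nonneg _ (hD0 i).le
      split <;> norm_num
    -- rewrite the RHS
    have hrhs : α * ∑ i ∈ S,
        (if harm s * p i ≤ α then (1 : ℝ) else 0) /
          (α * ((max ⌈(s : ℝ) * harm s * p i / α⌉ 1 : ℤ) : ℝ)) = ∑ i ∈ S, f i := by
      have hgen : ∀ t d : ℝ, d ≠ 0 → α * (t / (α * d)) = t / d := by
        intro t d hd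
        field_simp
      rw [Finset.mul_sum]
      refine Finset.sum_congr rfl fun i _ => ?_
      show α * ((if harm s * p i ≤ α then (1:ℝ) else 0) / (α * ((D i : ℤ) : ℝ)))
          = (if harm s * p i ≤ α then (1:ℝ) else 0) / ((D i : ℤ) : ℝ)
      exact hgen _ _ (hD0 i).ne'
    rw [hrhs]
    -- rank facts
    have hpi : ∀ i : Fin m, pord ((σ.symm i).val + 1) = p i := by
      intro i
      rw [hpord _ (σ.symm i).isLt, Fin.eta, Equiv.apply_symm_apply]
    -- key bound for ranks ≤ m-1
    have key1 : ∀ i : Fin m, (σ.symm i).val + 1 ≤ m - 1 →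
        harm s * p i ≤ α ∧ ((D i : ℝ)) ≤ ((σ.symm i).val : ℝ) + 2 := by
      intro i hr
      set r : ℕ := (σ.symm i).val with hrdef
      have hub0 := (hlow (r+1) (by omega) hr).2
      rw [hpi i] at hub0
      have hub' : p i ≤ ((r:ℝ) + 2) * q := by
        rw [hqdef]
        push_cast at hub0
        calc p i ≤ ((r:ℝ) + 1 + 1) * α / ((m:ℝ) * harm m) := hub0
          _ = ((r:ℝ) + 2) * (α / ((m:ℝ) * harm m)) := by ring
      have hp0 : 0 ≤ p i := (hp i).1
      have hr2 : (r:ℝ) + 2 ≤ m := by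
        have : r + 2 ≤ m := by omega
        exact_mod_cast this
      have hrq : ((r:ℝ) + 2) * q ≤ (m:ℝ) * q := by nlinarith
      constructor
      · have e1 : harm s * p i ≤ harm s * (((r:ℝ) + 2) * q) :=
          mul_le_mul_of_nonneg_left hub' hhs.le
        have e2 : harm s * (((r:ℝ) + 2) * q) ≤ harm m * ((m:ℝ) * q) := by
          apply mul_le_mul hhsm hrq (by positivity) (harm_nonneg m)
        have e3 : harm m * ((m:ℝ) * q) = α := by rw [← hqe]; ring
        linarith
      · have hsh : (s:ℝ) * harm s ≤ (m:ℝ) * harm m := by nlinarith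
        have e1 : (s:ℝ) * harm s * p i ≤ (s:ℝ) * harm s * (((r:ℝ) + 2) * q) :=
          mul_le_mul_of_nonneg_left hub' (by positivity)
        have e2 : (s:ℝ) * harm s * (((r:ℝ) + 2) * q) ≤ (m:ℝ) * harm m * (((r:ℝ) + 2) * q) :=
          mul_le_mul_of_nonneg_right hsh (by positivity)
        have e3 : (m:ℝ) * harm m * (((r:ℝ) + 2) * q) = ((r:ℝ) + 2) * α := by
          rw [← hqe]; ring
        have hx : (s : ℝ) * harm s * p i / α ≤ (r:ℝ) + 2 := by
          rw [div_le_iff₀ hα0]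
          nlinarith
        have hc : ⌈(s : ℝ) * harm s * p i / α⌉ ≤ (r:ℤ) + 2 := by
          rw [Int.ceil_le]
          push_cast
          exact hx
        have hmax : D i ≤ (r:ℤ) + 2 := by
          rw [hDdef]
          exact max_le hc (by omega)
        calc ((D i : ℝ)) ≤ (((r:ℤ) + 2 : ℤ) : ℝ) := by exact_mod_cast hmax
          _ = (r:ℝ) + 2 := by push_cast; ring
    -- key bound for rank m when s ≤ m-1
    have key2 : ∀ i : Fin m, (σ.symm i).val + 1 = m → s ≤ m - 1 →
        harm s * p i ≤ α ∧ ((D i : ℝ)) ≤ (m:ℝ) := by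
      intro i hr hsm1
      have hpm : pord m = p i := by
        conv_lhs => rw [← hr]
        exact hpi i
      have hub0 : p i ≤ α / harm (m-1) := hpm ▸ htop.2
      have hhs1 : harm s ≤ harm (m-1) := harm_mono hsm1
      have hp0 : 0 ≤ p i := (hp i).1
      have hqe1 : harm (m-1) * (α / harm (m-1)) = α := by field_simp
      have hq1 : 0 < α / harm (m-1) := by positivity
      constructor
      · have e1 : harm s * p i ≤ harm s * (α / harm (m-1)) :=
          mul_le_mul_of_nonneg_left hub0 hhs.le
        have e2 : harm s * (α / harm (m-1)) ≤ harm (m-1) * (α / harm (m-1)) :=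
          mul_le_mul_of_nonneg_right hhs1 hq1.le
        linarith
      · have hx : (s : ℝ) * harm s * p i / α ≤ (m:ℝ) := by
          rw [div_le_iff₀ hα0]
          have hsh0 : (0:ℝ) ≤ (s:ℝ) * harm s := mul_nonneg (Nat.cast_nonneg s) (harm_nonneg s)
          have e1 : (s:ℝ) * harm s * p i ≤ (s:ℝ) * harm s * (α / harm (m-1)) :=
            mul_le_mul_of_nonneg_left hub0 hsh0
          have e2 : (s:ℝ) * harm s * (α / harm (m-1)) ≤ (s:ℝ) * (harm (m-1) * (α / harm (m-1))) := by
            rw [mul_assoc]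
            exact mul_le_mul_of_nonneg_left (mul_le_mul_of_nonneg_right hhs1 hq1.le)
              (Nat.cast_nonneg s)
          rw [hqe1] at e2
          have e3 : (s:ℝ) * α ≤ (m:ℝ) * α := mul_le_mul_of_nonneg_right hsmR hα0.le
          linarith
        have hc : ⌈(s : ℝ) * harm s * p i / α⌉ ≤ (m:ℤ) := by
          rw [Int.ceil_le]
          push_cast
          exact hx
        have hmax : D i ≤ (m:ℤ) := by
          rw [hDdef]
          exact max_le hc (by exact_mod_cast hm0)
        exact_mod_cast hmax
    rcases eq_or_lt_of_le hsm with hseq | hslt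
    · -- s = m : S = univ
      have hSuniv : S = Finset.univ := by
        apply Finset.eq_univ_of_card
        simp [← hsdef, hseq]
      subst hSuniv
      have hgoal : (s:ℝ) / (m:ℝ) = 1 := by
        rw [hseq]; field_simp
      rw [hgoal]
      -- reindex by σ
      have hre : ∑ i ∈ Finset.univ, f i = ∑ j : Fin m, f (σ j) :=
        (Equiv.sum_comp σ f).symm
      rw [hre]
      -- lower bound each term
      set b : Fin m → ℝ := fun j => if (j:ℕ) + 1 ≤ m - 1 then 1 / ((j:ℕ) + 2 : ℝ) else 0
        with hbdef
      have hbf : ∀ j ∈ Finset.univ, b j ≤ f (σ j) := by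
        intro j _
        simp only [hbdef]
        by_cases hj : (j:ℕ) + 1 ≤ m - 1
        · rw [if_pos hj]
          have hsymm : (σ.symm (σ j)) = j := Equiv.symm_apply_apply σ j
          have hk := key1 (σ j) (by rw [hsymm]; exact hj)
          rw [hsymm] at hk
          simp only [hfdef]
          rw [if_pos hk.1]
          apply one_div_le_one_div_of_le (hD0 (σ j))
          calc ((D (σ j) : ℝ)) ≤ (j:ℕ) + 2 := hk.2
            _ = ((j:ℕ) + 2 : ℝ) := by push_cast; ring
        · rw [if_neg hj]
          exact hf0 (σ j)
      have hlb : ∑ j : Fin m, b j ≤ ∑ j : Fin m, f (σ j) := Finset.sum_le_sum hbf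
      have hbsum : ∑ j : Fin m, b j = harm m - 1 := by
        simp only [hbdef]
        rw [Fin.sum_univ_eq_sum_range (fun j => if j + 1 ≤ m - 1 then 1 / ((j:ℝ) + 2) else 0)]
        have hsub : ∑ j ∈ Finset.range (m-1), (if j + 1 ≤ m - 1 then 1 / ((j:ℝ) + 2) else 0)
            = ∑ j ∈ Finset.range m, (if j + 1 ≤ m - 1 then 1 / ((j:ℝ) + 2) else 0) := by
          apply Finset.sum_subset (Finset.range_subset_range.2 (by omega))
          intro x hx hx'
          rw [Finset.mem_range] at hx hx'
          rw [if_neg (by omega)]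
        rw [← hsub]
        have : ∑ j ∈ Finset.range (m-1), (if j + 1 ≤ m - 1 then 1 / ((j:ℝ) + 2) else 0)
            = ∑ j ∈ Finset.range (m-1), 1 / ((j:ℝ) + 2) := by
          apply Finset.sum_congr rfl
          intro x hx
          rw [Finset.mem_range] at hx
          rw [if_pos (by omega)]
        rw [this]
        have hmsplit : harm m = (∑ j ∈ Finset.range (m-1), 1 / ((j:ℝ) + 1 + 1)) + 1 := by
          have : m = (m - 1) + 1 := by omega
          rw [this, harm, Finset.sum_range_succ']
          push_cast
          norm_num
        have : ∑ j ∈ Finset.range (m-1), 1 / ((j:ℝ) + 2)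
            = ∑ j ∈ Finset.range (m-1), 1 / ((j:ℝ) + 1 + 1) := by
          apply Finset.sum_congr rfl
          intro x _; ring_nf
        rw [this]
        linarith
      have h2 := harm_ge_two hm
      linarith
    · -- s < m : every term is ≥ 1/m
      have hsm1 : s ≤ m - 1 := by omega
      have hterm : ∀ i ∈ S, (1:ℝ) / m ≤ f i := by
        intro i _
        have hrle : (σ.symm i).val + 1 ≤ m := (σ.symm i).isLt
        have hDm : harm s * p i ≤ α ∧ ((D i : ℝ)) ≤ (m:ℝ) := by
          rcases (by omega : (σ.symm i).val + 1 ≤ m - 1 ∨ (σ.symm i).val + 1 = m) with h | h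
          · obtain ⟨h1, h2⟩ := key1 i h
            refine ⟨h1, le_trans h2 ?_⟩
            have : (σ.symm i).val + 2 ≤ m := by omega
            exact_mod_cast this
          · exact key2 i h hsm1
        simp only [hfdef]
        rw [if_pos hDm.1]
        exact one_div_le_one_div_of_le (hD0 i) hDm.2
      calc (s:ℝ) / m = ∑ _i ∈ S, (1:ℝ)/m := by
            rw [Finset.sum_const, nsmul_eq_mul, ← hsdef]
            ring
        _ ≤ ∑ i ∈ S, f i := Finset.sum_le_sum hterm
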